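/- arXiv:2503.04762 — 2 statements merged into one kernel-verified Lean document; each statement's English description precedes it below -/
import Mathlib

section
/- STL formula erosion theorem: Let φ be a negation-free STL formula over predicates with superlevel sets C₁,…,C_m, and let φ̃ be obtained by replacing each Cᵢ with Cᵢ ⊖ Ẽ for a fixed set Ẽ ⊆ ℝⁿ. If a trace x : {0,…,T} → ℝⁿ satisfies φ̃ at time 0, then for every perturbation sequence e : {0,…,T} → ℝⁿ with e_t ∈ Ẽ for all t, the perturbed trace t ↦ x_t + e_t satisfies φ at time 0. -/
/-- Negation-free STL formulas over states in `Fin n → ℝ`. -/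
inductive STL (n : ℕ) where
  | top : STL n
  | pred : Set (Fin n → ℝ) → STL n
  | and : STL n → STL n → STL n
  | or : STL n → STL n → STL n
  | untl : ℕ → ℕ → STL n → STL n → STL n

/-- Discrete-time boolean semantics of negation-free STL over traces `x : ℕ → (Fin n → ℝ)`. -/
def Sat {n : ℕ} (x : ℕ → (Fin n → ℝ)) : STL n → ℕ → Prop
  | .top, _ => True
  | .pred C, t => x t ∈ C
  | .and φ ψ, t => Sat x φ t ∧ Sat x ψ t
  | .or φ ψ, t => Sat x φ t ∨ Sat x ψ t
  | .untl t₁ t₂ φ ψ, t => ∃ τ, t + t₁ ≤ τ ∧ τ ≤ t + t₂ ∧ Sat x ψ τ ∧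
      ∀ τ', t ≤ τ' → τ' ≤ τ → Sat x φ τ'

/-- Replace every predicate superlevel set `C` by `g C`, keeping all operators unchanged. -/
def mapPred {n : ℕ} (g : Set (Fin n → ℝ) → Set (Fin n → ℝ)) : STL n → STL n
  | .top => .top
  | .pred C => .pred (g C)
  | .and φ ψ => .and (mapPred g φ) (mapPred g ψ)
  | .or φ ψ => .or (mapPred g φ) (mapPred g ψ)
  | .untl t₁ t₂ φ ψ => .untl t₁ t₂ (mapPred g φ) (mapPred g ψ)

/-- Pontryagin (Minkowski) difference. -/
def minkDiff {n : ℕ} (A B : Set (Fin n → ℝ)) : Set (Fin n → ℝ) :=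
  {x | ∀ y ∈ B, x + y ∈ A}


lemma stl_erosion_aux {n : ℕ} (Etil : Set (Fin n → ℝ)) (x e : ℕ → (Fin n → ℝ))
    (he : ∀ t, e t ∈ Etil) (φ : STL n) :
    ∀ t, Sat x (mapPred (fun C => minkDiff C Etil) φ) t →
      Sat (fun t => x t + e t) φ t := by
  induction φ with
  | top => intro t _; trivial
  | pred C => intro t h; exact h (e t) (he t)
  | and φ ψ ihφ ihψ => intro t h; exact ⟨ihφ t h.1, ihψ t h.2⟩
  | or φ ψ ihφ ihψ =>
      intro t h
      cases h with
      | inl h => exact Or.inl (ihφ t h)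
      | inr h => exact Or.inr (ihψ t h)
  | untl t₁ t₂ φ ψ ihφ ihψ =>
      intro t h
      obtain ⟨τ, h1, h2, h3, h4⟩ := h
      exact ⟨τ, h1, h2, ihψ τ h3, fun τ' ha hb => ihφ τ' (h4 τ' ha hb)⟩

/-- STL formula erosion theorem: if the deterministic trace satisfies the eroded
formula, every admissibly perturbed trace satisfies the original formula. -/
theorem stl_erosion {n : ℕ} (φ : STL n) (Etil : Set (Fin n → ℝ))
    (x : ℕ → (Fin n → ℝ))
    (h : Sat x (mapPred (fun C => minkDiff C Etil) φ) 0) :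
    ∀ e : ℕ → (Fin n → ℝ), (∀ t, e t ∈ Etil) →
      Sat (fun t => x t + e t) φ 0 := fun e he => stl_erosion_aux Etil x e he φ 0 h
end

section
/- Erosion commutes with until: if for traces x and all admissible perturbations e (e_t ∈ Ẽ for all t) the implications (x ⊨_τ φ̃₁ ⟹ x+e ⊨_τ φ₁) and (x ⊨_τ φ̃₂ ⟹ x+e ⊨_τ φ₂) hold for all τ, then x ⊨_t φ̃₁ U_{[t₁,t₂]} φ̃₂ implies x+e ⊨_t φ₁ U_{[t₁,t₂]} φ₂ for all such e. (Induction step for the temporal until operator.) -/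
/-- Erosion commutes with the until operator (induction step). -/
theorem erosion_until {n : ℕ} (Etil : Set (Fin n → ℝ))
    (φ₁ φ₂ φt₁ φt₂ : STL n) (t₁ t₂ : ℕ) (x : ℕ → (Fin n → ℝ))
    (h₁ : ∀ τ : ℕ, ∀ e : ℕ → (Fin n → ℝ), (∀ s, e s ∈ Etil) →
      Sat x φt₁ τ → Sat (fun s => x s + e s) φ₁ τ)
    (h₂ : ∀ τ : ℕ, ∀ e : ℕ → (Fin n → ℝ), (∀ s, e s ∈ Etil) →
      Sat x φt₂ τ → Sat (fun s => x s + e s) φ₂ τ)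
    (t : ℕ) (h : Sat x (.untl t₁ t₂ φt₁ φt₂) t) :
    ∀ e : ℕ → (Fin n → ℝ), (∀ s, e s ∈ Etil) →
      Sat (fun s => x s + e s) (.untl t₁ t₂ φ₁ φ₂) t := by
  intro e he
  obtain ⟨τ, hτ1, hτ2, hψ, hφ⟩ := h
  exact ⟨τ, hτ1, hτ2, h₂ τ e he hψ, fun τ' h1 h2 => h₁ τ' e he (hφ τ' h1 h2)⟩
end
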